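/- arXiv:1812.08647 — 3 statements merged into one kernel-verified Lean document; each statement's English description precedes it below -/
import Mathlib

section
/- Let 0 ≠ g ∈ L²(ℝ) be supported in a half-line (−∞, a] or [a, ∞). Then for any finite set Λ = {(a_k,b_k)}_{k=1}^N of distinct points in ℝ², the set {M_{b_k}T_{a_k}g}_{k=1}^N is linearly independent in L²(ℝ). -/
/-!
Reflecting `x ↦ -x` if necessary, let `g` vanish a.e. to the right of some point, and let `r` be
its essential right edge: `g = 0` a.e. on `(r, ∞)`, while `g ≠ 0` on a set of positive measure in
every `(t, r]`. If `A` is the largest translation parameter and `A'` the next one, then on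
`(r + A', r + A]` the relation reads `g(x - A) · ∑_{a_k = A} c_k e^{2πi b_k x} = 0`. The
trigonometric polynomial is real-analytic and so vanishes on a set of positive measure only if it
vanishes identically; by independence of characters its coefficients are zero. The top layer of
translations is thus removed, and induction finishes the proof.
-/

open MeasureTheory Real Complex Filter Set
open scoped Topology

/-- Viewing `x ↦ e^{2πibx}` as a monoid hom lets Dedekind's independence of characters apply. -/
noncomputable def expChar (b : ℝ) : Multiplicative ℝ →* ℂ where
  toFun x := cexp (2 * π * I * b * x.toAdd)
  map_one' := by simp
  map_mul' x y := by simp only [toAdd_mul, ofReal_add, mul_add, Complex.exp_add]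

lemma hasDerivAt_zero_cexp_two_pi_I_mul (b : ℝ) :
    HasDerivAt (fun x : ℝ => cexp (2 * π * I * b * x)) (2 * π * I * b) 0 := by
  simpa using ((hasDerivAt_id (0 : ℝ)).ofReal_comp.const_mul (2 * π * I * b)).cexp

lemma expChar_injective : Function.Injective expChar := by
  intro b b' hbb
  have hfun : (fun x : ℝ => cexp (2 * π * I * b * x)) = fun x : ℝ => cexp (2 * π * I * b' * x) :=
    congrArg DFunLike.coe hbb
  have h := (hasDerivAt_zero_cexp_two_pi_I_mul b).unique
    (hfun ▸ hasDerivAt_zero_cexp_two_pi_I_mul b')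
  simpa [Real.pi_ne_zero, I_ne_zero] using h

lemma linearIndependent_cexp_two_pi_I_mul :
    LinearIndependent ℂ (fun (b : ℝ) (x : ℝ) => cexp (2 * π * I * b * x)) :=
  (linearIndependent_monoidHom (Multiplicative ℝ) ℂ).comp expChar expChar_injective

lemma AnalyticOnNhd.eq_zero_of_frequently_ae_eq_zero {𝕜 E : Type*} [NontriviallyNormedField 𝕜]
    [ConnectedSpace 𝕜] [SecondCountableTopology 𝕜] [MeasurableSpace 𝕜]
    [NormedAddCommGroup E] [NormedSpace 𝕜 E] {μ : Measure 𝕜} [NullSingletonClass μ]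
    {f : 𝕜 → E} (hf : AnalyticOnNhd 𝕜 f univ) (h : ∃ᵐ x ∂μ, f x = 0) : f = 0 := by
  by_contra hne
  obtain ⟨x, hx⟩ := Function.ne_iff.1 hne
  have := ae_restrict_le_codiscreteWithin (μ := μ) MeasurableSet.univ
    (hf.preimage_zero_mem_codiscrete hx)
  rw [Measure.restrict_univ] at this
  exact h this

lemma coeff_eq_zero_of_frequently_sum_cexp_eq_zero {ι : Type*} {P : Finset ι} {b : ι → ℝ}
    (hb : InjOn b P) {c : ι → ℂ} {μ : Measure ℝ} [NullSingletonClass μ]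
    (h : ∃ᵐ (x : ℝ) ∂μ, ∑ k ∈ P, c k * cexp (2 * π * I * b k * x) = 0) : ∀ k ∈ P, c k = 0 := by
  have hF : (fun x : ℝ => ∑ k ∈ P, c k * cexp (2 * π * I * b k * x)) = 0 := by
    refine AnalyticOnNhd.eq_zero_of_frequently_ae_eq_zero (fun x _ => ?_) h
    refine Finset.analyticAt_fun_sum _ fun k _ => analyticAt_const.mul ?_
    exact analyticAt_cexp.restrictScalars.comp (analyticAt_const.mul (ofRealCLM.analyticAt x))
  have hli := (linearIndependent_cexp_two_pi_I_mul.linearIndepOn _).comp_of_image hb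
  refine linearIndepOn_iff'.1 hli P c subset_rfl ?_
  simpa [funext_iff] using hF

lemma Filter.exists_frequently_ge (F : Filter ℝ) [F.NeBot] [CountableInterFilter F] :
    ∃ m : ℝ, ∃ᶠ x in F, m ≤ x := by
  by_contra! h
  obtain ⟨x, hx⟩ := (eventually_countable_forall.2 fun n : ℕ => h (-n)).exists
  obtain ⟨n, hn⟩ := exists_nat_gt (-x)
  linarith [hx n]

lemma Filter.exists_eventually_le_forall_frequently_lt {F : Filter ℝ} [F.NeBot]
    [CountableInterFilter F] {a : ℝ} (ha : ∀ᶠ x in F, x ≤ a) :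
    ∃ r, (∀ᶠ x in F, x ≤ r) ∧ ∀ t < r, ∃ᶠ x in F, t < x := by
  obtain ⟨m, hm⟩ := F.exists_frequently_ge
  have hcobdd : F.IsCoboundedUnder (· ≤ ·) id :=
    ⟨m, fun s hs => by obtain ⟨x, hmx, hxs⟩ := (hm.and_eventually hs).exists; exact hmx.trans hxs⟩
  exact ⟨limsup id F, eventually_le_limsup ⟨a, ha⟩, fun t ht => frequently_lt_of_lt_limsup hcobdd ht⟩

lemma exists_ae_right_edge {M : Type*} [Zero M] {μ : Measure ℝ} {g : ℝ → M}
    (hg0 : ¬ g =ᵐ[μ] 0) {a : ℝ} (ha : ∀ᵐ x ∂μ, a < x → g x = 0) :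
    ∃ r, (∀ᵐ x ∂μ, r < x → g x = 0) ∧ ∀ t < r, ∃ᵐ x ∂μ, t < x ∧ g x ≠ 0 := by
  have : (ae μ ⊓ 𝓟 {x | g x ≠ 0}).NeBot := frequently_mem_iff_neBot.1 (not_eventually.1 hg0)
  have hle (s : ℝ) : (∀ᵐ x ∂μ, s < x → g x = 0) ↔ ∀ᶠ x in ae μ ⊓ 𝓟 {x | g x ≠ 0}, x ≤ s := by
    simp only [eventually_inf_principal, mem_ofPred_eq]
    exact eventually_congr (.of_forall fun x => by rw [← not_imp_not, not_lt, ne_eq])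
  obtain ⟨r, hr, hr'⟩ := exists_eventually_le_forall_frequently_lt ((hle a).1 ha)
  refine ⟨r, (hle r).2 hr, fun t ht => ?_⟩
  simpa only [frequently_inf_principal, mem_ofPred_eq, and_comm] using hr' t ht
lemma frequently_sum_top_eq_zero {ι : Type*} {P : Finset ι} {a b : ι → ℝ} {A : ℝ}
    (hA : ∀ k ∈ P, a k ≤ A) {g : ℝ → ℂ} {r : ℝ} (hr : ∀ᵐ x, r < x → g x = 0)
    (hr' : ∀ t < r, ∃ᵐ x, t < x ∧ g x ≠ 0) {c : ι → ℂ}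
    (h : ∀ᵐ x : ℝ, ∑ k ∈ P, c k * cexp (2 * π * I * b k * x) * g (x - a k) = 0) :
    ∃ᵐ x : ℝ, ∑ k ∈ P with a k = A, c k * cexp (2 * π * I * b k * x) = 0 := by
  -- beyond `t + A`, only the translates with `a k = A` can be nonzero
  obtain ⟨t, ht, htr⟩ : ∃ t, (∀ k ∈ P, a k < A → r + a k < t + A) ∧ t < r := by
    refine ((P.eventually_all.2 fun k _ => ?_).and self_mem_nhdsWithin).exists (f := 𝓝[<] r)
    by_cases hk : a k < A
    · filter_upwards [nhdsWithin_le_nhds (eventually_gt_nhds (by linarith : r + a k - A < r))]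
      intros
      linarith
    · exact .of_forall fun _ hk' => absurd hk' hk
  have hfreq : ∃ᵐ x, t + A < x ∧ g (x - A) ≠ 0 :=
    (measurePreserving_add_right volume A).quasiMeasurePreserving.tendsto_ae.frequently
      ((hr' t htr).mono fun y hy => by simpa [lt_sub_iff_add_lt] using hy)
  have hvanish : ∀ᵐ x, ∀ k ∈ P, r + a k < x → g (x - a k) = 0 :=
    P.eventually_all.2 fun k _ =>
      ((measurePreserving_sub_right volume (a k)).quasiMeasurePreserving.ae hr).mono
        fun x hx hlt => hx (by linarith)
  refine (hfreq.and_eventually (h.and hvanish)).mono ?_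
  rintro x ⟨⟨hxt, hgx⟩, hsum, hvan⟩
  have htop : ∑ k ∈ P, c k * cexp (2 * π * I * b k * x) * g (x - a k)
      = (∑ k ∈ P with a k = A, c k * cexp (2 * π * I * b k * x)) * g (x - A) := by
    rw [Finset.sum_filter, Finset.sum_mul]
    refine Finset.sum_congr rfl fun k hk => ?_
    split_ifs with hkA
    · rw [hkA]
    · rw [hvan k hk (by linarith [ht k hk ((hA k hk).lt_of_ne hkA)]), mul_zero, zero_mul]
  exact (mul_eq_zero.1 (htop ▸ hsum)).resolve_right hgx

theorem coeff_eq_zero_of_ae_sum_eq_zero_of_ae_eq_zero_Ioi {ι : Type*} {a b : ι → ℝ}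
    (hab : Function.Injective fun k => (a k, b k)) {g : ℝ → ℂ} (hg0 : ¬ g =ᵐ[volume] 0)
    {a₀ : ℝ} (ha₀ : ∀ᵐ x, a₀ < x → g x = 0) (P : Finset ι) {c : ι → ℂ}
    (h : ∀ᵐ x : ℝ, ∑ k ∈ P, c k * cexp (2 * π * I * b k * x) * g (x - a k) = 0) :
    ∀ k ∈ P, c k = 0 := by
  classical
  obtain ⟨r, hr, hr'⟩ := exists_ae_right_edge hg0 ha₀
  induction P using Finset.induction_on_max_value a with
  | empty => simp
  | insert j P hj hmax ih =>
    have hA : ∀ k ∈ insert j P, a k ≤ a j := Finset.forall_mem_insert .. |>.2 ⟨le_rfl, hmax⟩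
    have hinj : InjOn b ↑({k ∈ insert j P | a k = a j} : Finset ι) := fun k hk l hl hkl => by
      simp only [Finset.coe_filter, mem_ofPred_eq] at hk hl
      exact hab (Prod.ext (hk.2.trans hl.2.symm) hkl)
    have hcj : c j = 0 :=
      coeff_eq_zero_of_frequently_sum_cexp_eq_zero hinj (frequently_sum_top_eq_zero hA hr hr' h) j
        (by simp)
    refine Finset.forall_mem_insert .. |>.2 ⟨hcj, ih ?_⟩
    simpa only [Finset.sum_insert hj, hcj, zero_mul, zero_add] using h

theorem coeff_eq_zero_of_ae_sum_eq_zero_of_ae_eq_zero_Iio {ι : Type*} {a b : ι → ℝ}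
    (hab : Function.Injective fun k => (a k, b k)) {g : ℝ → ℂ} (hg0 : ¬ g =ᵐ[volume] 0)
    {a₀ : ℝ} (ha₀ : ∀ᵐ x, x < a₀ → g x = 0) (P : Finset ι) {c : ι → ℂ}
    (h : ∀ᵐ x : ℝ, ∑ k ∈ P, c k * cexp (2 * π * I * b k * x) * g (x - a k) = 0) :
    ∀ k ∈ P, c k = 0 := by
  have hneg := (Measure.measurePreserving_neg (volume : Measure ℝ)).quasiMeasurePreserving
  refine coeff_eq_zero_of_ae_sum_eq_zero_of_ae_eq_zero_Ioi (a := -a) (b := -b) (g := g ∘ Neg.neg)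
    (neg_injective.comp hab) (fun h0 => hg0 ?_) (a₀ := -a₀) ?_ P ?_
  · simpa [Function.comp_def, Pi.zero_def] using hneg.ae_eq h0
  · exact (hneg.ae ha₀).mono fun x hx hlt => hx (by linarith)
  · refine (hneg.ae h).mono fun x hx => ?_
    convert hx using 3 with k
    · simp only [Pi.neg_apply, ofReal_neg]
      ring_nf
    · simp only [Pi.neg_apply, Function.comp_apply]
      ring_nf

theorem hrt_half_line_support_general
    (g : ℝ → ℂ) (hg0 : ¬ g =ᵐ[volume] 0)
    (hsupp : ∃ a : ℝ, (∀ᵐ x : ℝ ∂volume, a < x → g x = 0) ∨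
      (∀ᵐ x : ℝ ∂volume, x < a → g x = 0))
    (N : ℕ) (Λ : Fin N → ℝ × ℝ) (hΛ : Function.Injective Λ)
    (c : Fin N → ℂ)
    (h : (fun x : ℝ => ∑ k : Fin N,
        c k * Complex.exp (2 * π * Complex.I * (Λ k).2 * x) * g (x - (Λ k).1))
      =ᵐ[volume] 0) :
    ∀ k : Fin N, c k = 0 := by
  obtain ⟨a, ha | ha⟩ := hsupp
  · exact fun k => coeff_eq_zero_of_ae_sum_eq_zero_of_ae_eq_zero_Ioi hΛ hg0 ha _ h k (by simp)
  · exact fun k => coeff_eq_zero_of_ae_sum_eq_zero_of_ae_eq_zero_Iio hΛ hg0 ha _ h k (by simp)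

/-- HRT for one-sided supported windows: if `0 ≠ g ∈ L²(ℝ)` is supported in a half-line
`(−∞, a]` or `[a, ∞)`, then for any finite set of distinct points `(a_k, b_k)` the
time-frequency shifts `M_{b_k}T_{a_k}g` are linearly independent. -/
theorem hrt_half_line_support
    (g : ℝ → ℂ) (hg : MemLp g 2 (volume : Measure ℝ)) (hg0 : ¬ g =ᵐ[volume] 0)
    (hsupp : ∃ a : ℝ, (∀ᵐ x : ℝ ∂volume, a < x → g x = 0) ∨
      (∀ᵐ x : ℝ ∂volume, x < a → g x = 0))
    (N : ℕ) (Λ : Fin N → ℝ × ℝ) (hΛ : Function.Injective Λ)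
    (c : Fin N → ℂ)
    (h : (fun x : ℝ => ∑ k : Fin N,
        c k * Complex.exp (2 * π * Complex.I * (Λ k).2 * x) * g (x - (Λ k).1))
      =ᵐ[volume] 0) :
    ∀ k : Fin N, c k = 0 :=
  hrt_half_line_support_general g hg0 hsupp N Λ hΛ c h
end

section
/- Let g(x) = p(x)e^{−πx²} where p is a nonzero polynomial. Then for any finite set of distinct points (a_k,b_k) ∈ ℝ², k = 1,…,N, the functions e^{2πib_kx} g(x−a_k) are linearly independent in L²(ℝ). -/
/-!
Multiplying by `e^{πx²}` turns `c e^{2πibx} g(x - a)` into `c e^{-πa²} p(x - a) e^{2π(a + ib)x}`,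
so a vanishing combination becomes an exponential polynomial `∑ q_k(x) e^{μ_k x}` vanishing on `ℝ`,
with pairwise distinct frequencies `μ_k = 2π(a_k + i b_k)`. All its coefficients vanish: the
operator `(d/dx - μ_k)^{deg q_k + 1}` kills the `k`-th term and acts on each other term through
`q ↦ q' + (μ_j - μ_k) q`, which is injective on polynomials, so induction on the number of
frequencies applies. Finally `q_k = c_k e^{-πa_k²} p(X - a_k)` with `p ≠ 0`, so `c_k = 0`.
-/

open MeasureTheory Real Complex Polynomial

namespace Polynomial

variable {R : Type*} [Semiring R]

noncomputable def derivativeAddSMul (c : R) (q : R[X]) : R[X] := derivative q + c • q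

theorem iterate_derivativeAddSMul_zero_of_natDegree_lt {q : R[X]} {n : ℕ} (hn : q.natDegree < n) :
    (derivativeAddSMul 0)^[n] q = 0 := by
  have hD : derivativeAddSMul (0 : R) = derivative := by
    funext q
    simp [derivativeAddSMul]
  rw [hD]
  exact iterate_derivative_eq_zero hn

variable [NoZeroDivisors R]

theorem derivativeAddSMul_ne_zero {c : R} (hc : c ≠ 0) {q : R[X]} (hq : q ≠ 0) :
    derivativeAddSMul c q ≠ 0 := by
  have hdeg : (derivative q).degree < (c • q).degree := by
    rw [smul_eq_C_mul, degree_C_mul hc]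
    exact degree_derivative_lt hq
  rw [derivativeAddSMul, ← degree_ne_bot, degree_add_eq_right_of_degree_lt hdeg, smul_eq_C_mul,
    degree_C_mul hc, degree_ne_bot]
  exact hq

theorem iterate_derivativeAddSMul_ne_zero {c : R} (hc : c ≠ 0) {q : R[X]} (hq : q ≠ 0) (n : ℕ) :
    (derivativeAddSMul c)^[n] q ≠ 0 := by
  induction n with
  | zero => exact hq
  | succ n ih => rw [Function.iterate_succ_apply']; exact derivativeAddSMul_ne_zero hc ih

theorem eq_zero_of_forall_eval_ofReal_eq_zero {q : ℂ[X]} (h : ∀ x : ℝ, q.eval (x : ℂ) = 0) :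
    q = 0 :=
  eq_zero_of_infinite_isRoot q <| (Set.infinite_range_of_injective ofReal_injective).mono <| by
    rintro _ ⟨x, rfl⟩; exact h x

end Polynomial

theorem hasDerivAt_eval_ofReal_mul_cexp (q : ℂ[X]) (μ : ℂ) (x : ℝ) :
    HasDerivAt (fun y : ℝ => q.eval (y : ℂ) * cexp (μ * y))
      ((derivativeAddSMul μ q).eval (x : ℂ) * cexp (μ * x)) x := by
  have hexp : HasDerivAt (fun z : ℂ => cexp (μ * z)) (cexp (μ * x) * μ) x := by
    simpa using ((hasDerivAt_id (x : ℂ)).const_mul μ).cexp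
  convert ((q.hasDerivAt (x : ℂ)).fun_mul hexp).comp_ofReal using 1
  simp only [derivativeAddSMul, eval_add, eval_smul, smul_eq_mul]
  ring

section ExpPoly

variable {ι : Type*}

noncomputable def expPoly (s : Finset ι) (μ : ι → ℂ) (q : ι → ℂ[X]) (x : ℝ) : ℂ :=
  ∑ k ∈ s, (q k).eval (x : ℂ) * cexp (μ k * x)

variable {s : Finset ι} {μ : ι → ℂ} {q : ι → ℂ[X]}

theorem hasDerivAt_expPoly (x : ℝ) :
    HasDerivAt (expPoly s μ q) (expPoly s μ (fun k => derivativeAddSMul (μ k) (q k)) x) x := by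
  unfold expPoly
  exact HasDerivAt.fun_sum fun k _ => hasDerivAt_eval_ofReal_mul_cexp (q k) (μ k) x

theorem expPoly_derivativeAddSMul_sub_eq_zero (h : expPoly s μ q = 0) (c : ℂ) :
    expPoly s μ (fun k => derivativeAddSMul (μ k - c) (q k)) = 0 := by
  funext x
  have hderiv : expPoly s μ (fun k => derivativeAddSMul (μ k) (q k)) x = 0 := by
    have := hasDerivAt_expPoly (s := s) (μ := μ) (q := q) x
    rw [h] at this
    exact (hasDerivAt_const x (0 : ℂ)).unique this |>.symm
  have hval : expPoly s μ q x = 0 := congrFun h x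
  calc expPoly s μ (fun k => derivativeAddSMul (μ k - c) (q k)) x
      = expPoly s μ (fun k => derivativeAddSMul (μ k) (q k)) x - c * expPoly s μ q x := by
        simp only [expPoly, derivativeAddSMul, eval_add, eval_smul, smul_eq_mul, Finset.mul_sum,
          ← Finset.sum_sub_distrib]
        exact Finset.sum_congr rfl fun k _ => by ring
    _ = 0 := by rw [hderiv, hval, mul_zero, sub_zero]

theorem expPoly_iterate_derivativeAddSMul_sub_eq_zero (h : expPoly s μ q = 0) (c : ℂ) (n : ℕ) :
    expPoly s μ (fun k => (derivativeAddSMul (μ k - c))^[n] (q k)) = 0 := by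
  induction n with
  | zero => exact h
  | succ n ih =>
    simpa only [Function.iterate_succ_apply'] using expPoly_derivativeAddSMul_sub_eq_zero ih c

theorem expPoly_insert [DecidableEq ι] {k : ι} (hk : k ∉ s) (x : ℝ) :
    expPoly (insert k s) μ q x = (q k).eval (x : ℂ) * cexp (μ k * x) + expPoly s μ q x :=
  Finset.sum_insert hk

theorem expPoly_eq_zero_of_forall_eq_zero (hq : ∀ k ∈ s, q k = 0) : expPoly s μ q = 0 := by
  funext x
  exact Finset.sum_eq_zero fun k hk => by simp [hq k hk]

theorem eq_zero_of_expPoly_eq_zero [DecidableEq ι] (hμ : Set.InjOn μ s) (h : expPoly s μ q = 0) :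
    ∀ k ∈ s, q k = 0 := by
  induction s using Finset.induction_on generalizing q with
  | empty => simp
  | insert k s hks ih =>
    have hμs : Set.InjOn μ s := hμ.mono (by simp)
    have hrest : ∀ j ∈ s, q j = 0 := by
      have hkill := expPoly_iterate_derivativeAddSMul_sub_eq_zero h (μ k) ((q k).natDegree + 1)
      have hs : expPoly s μ (fun j => (derivativeAddSMul (μ j - μ k))^[(q k).natDegree + 1] (q j))
          = 0 := by
        funext x
        have := congrFun hkill x
        rwa [expPoly_insert hks, sub_self,
          iterate_derivativeAddSMul_zero_of_natDegree_lt (Nat.lt_succ_self _), eval_zero,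
          zero_mul, zero_add] at this
      intro j hj
      by_contra hqj
      have hne : μ j - μ k ≠ 0 :=
        sub_ne_zero.2 fun heq => hks (hμ (by simp [hj]) (by simp) heq ▸ hj)
      exact iterate_derivativeAddSMul_ne_zero hne hqj _ (ih hμs hs j hj)
    have hk : q k = 0 := eq_zero_of_forall_eval_ofReal_eq_zero fun x => by
      have := congrFun h x
      rw [expPoly_insert hks, expPoly_eq_zero_of_forall_eq_zero hrest] at this
      simpa [Complex.exp_ne_zero] using this
    intro j hj
    rcases Finset.mem_insert.1 hj with rfl | hj
    exacts [hk, hrest j hj]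

end ExpPoly

theorem injective_two_pi_mul_add_mul_I :
    Function.Injective fun z : ℝ × ℝ => 2 * (π : ℂ) * (z.1 + z.2 * I) := by
  have h2π : 2 * (π : ℂ) ≠ 0 := by simp [pi_ne_zero]
  intro z w hzw
  simpa [← equivRealProd_symm_apply] using (mul_right_injective₀ h2π) hzw

theorem gabor_term_mul_cexp_pi_sq (p : ℂ[X]) (c : ℂ) (a b x : ℝ) :
    c * cexp (2 * π * I * b * x) * (p.eval ((x - a : ℝ) : ℂ) * cexp (-(π * ((x - a : ℝ) : ℂ) ^ 2)))
        * cexp (π * x ^ 2)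
      = ((c * cexp (-(π * a ^ 2))) • p.comp (X - C (a : ℂ))).eval (x : ℂ)
        * cexp (2 * π * (a + b * I) * x) := by
  have hexp : cexp (2 * π * I * b * x) * cexp (-(π * ((x : ℂ) - a) ^ 2)) * cexp (π * x ^ 2)
      = cexp (-(π * a ^ 2)) * cexp (2 * π * (a + b * I) * x) := by
    simp only [← Complex.exp_add]
    congr 1
    ring
  simp only [eval_smul, eval_comp, eval_sub, eval_X, eval_C, smul_eq_mul, ofReal_sub]
  linear_combination (c * p.eval ((x : ℂ) - a)) * hexp

/-- HRT for Hermite-type windows: if `g(x) = p(x)e^{−πx²}` with `p` a nonzero polynomial, then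
for any finite set of distinct points `(a_k, b_k)` the functions `e^{2πib_k x} g(x−a_k)` are
linearly independent in `L²(ℝ)`. -/
theorem hrt_hermite_windows
    (p : Polynomial ℂ) (hp : p ≠ 0) (g : ℝ → ℂ)
    (hgdef : ∀ x : ℝ, g x = p.eval (x : ℂ) * Complex.exp (-(π * x ^ 2)))
    (N : ℕ) (Λ : Fin N → ℝ × ℝ) (hΛ : Function.Injective Λ)
    (c : Fin N → ℂ)
    (h : (fun x : ℝ => ∑ k : Fin N,
        c k * Complex.exp (2 * π * Complex.I * (Λ k).2 * x) * g (x - (Λ k).1))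
      =ᵐ[volume] 0) :
    ∀ k : Fin N, c k = 0 := by
  obtain rfl : g = fun x : ℝ => p.eval (x : ℂ) * cexp (-(π * x ^ 2)) := funext hgdef
  have hzero := (Continuous.ae_eq_iff_eq volume (by fun_prop) continuous_zero).1 h
  let μ : Fin N → ℂ := fun k => 2 * π * ((Λ k).1 + (Λ k).2 * I)
  let q : Fin N → ℂ[X] := fun k =>
    (c k * cexp (-(π * (Λ k).1 ^ 2))) • p.comp (X - C ((Λ k).1 : ℂ))
  have hexp : expPoly Finset.univ μ q = 0 := by
    funext x
    simp only [expPoly, μ, q, ← gabor_term_mul_cexp_pi_sq, ← Finset.sum_mul]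
    rw [congrFun hzero x, Pi.zero_apply, zero_mul]
  intro k
  have hqk : q k = 0 := eq_zero_of_expPoly_eq_zero (injective_two_pi_mul_add_mul_I.comp hΛ).injOn
    hexp k (Finset.mem_univ k)
  have hcomp : p.comp (X - C ((Λ k).1 : ℂ)) ≠ 0 := by
    rwa [sub_eq_add_neg, ← C_neg, comp_X_add_C_ne_zero_iff]
  simpa [q, hcomp, Complex.exp_ne_zero] using hqk
end

section
/- Let g ∈ L²(ℝ) be real-valued and nonzero, and let (a,b), (a₀,0) ∈ ℝ² with a₀ ≠ 0. If the symmetric five-point set {g, M₁g, M_{−1}g, M_bT_a g, M_{−b}T_a g} is linearly independent in L²(ℝ), then the four-point set {g, M₁g, T_{a₀}g, M_bT_a g} is linearly independent in L²(ℝ). -/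
/-! If `c₃ ≠ 0`, subtracting `c₃` times the complex conjugate of the relation from `conj c₃`
times the relation cancels `T_{a₀}g` (as `g` is real) and leaves a relation among the five
symmetric time-frequency shifts, so `c₂ = c₄ = 0` and `T_{a₀}g = λg`. Translation preserves the
`L^p` norm, hence `|λ| = 1` and `|g|^p` is `a₀`-periodic a.e.; a periodic function on `ℝ` with
finite integral vanishes a.e. If `c₃ = 0` the relation already is one among the five shifts. -/

open MeasureTheory Real Complex Set ENNReal

namespace MeasureTheory

variable {G α : Type*} [MeasurableSpace G] [AddGroup G] [MeasurableAdd G]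

def aePeriods (μ : Measure G) [μ.IsAddLeftInvariant] (f : G → α) : AddSubgroup G where
  carrier := {t | ∀ᵐ x ∂μ, f (t + x) = f x}
  zero_mem' := by simp
  add_mem' {s t} (hs : ∀ᵐ x ∂μ, f (s + x) = f x) (ht : ∀ᵐ x ∂μ, f (t + x) = f x) := by
    change ∀ᵐ x ∂μ, f (s + t + x) = f x
    filter_upwards [(measurePreserving_add_left μ t).quasiMeasurePreserving.ae hs, ht]
      with x hs ht
    rw [add_assoc, hs, ht]
  neg_mem' {t} (ht : ∀ᵐ x ∂μ, f (t + x) = f x) := by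
    change ∀ᵐ x ∂μ, f (-t + x) = f x
    filter_upwards [(measurePreserving_add_left μ (-t)).quasiMeasurePreserving.ae ht] with x ht
    rw [← ht, add_neg_cancel_left]

theorem lintegral_eq_zero_of_mem_aePeriods {f : ℝ → ℝ≥0∞} {T : ℝ} (hT : T ≠ 0)
    (hTf : T ∈ aePeriods volume f) (hfin : ∫⁻ x, f x ≠ ∞) : ∫⁻ x, f x = 0 := by
  have hpos : 0 < |T| := abs_pos.mpr hT
  have : Infinite (AddSubgroup.zmultiples |T|) :=
    Infinite.of_injective (fun n : ℤ => (⟨n • |T|, n, rfl⟩ : AddSubgroup.zmultiples |T|))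
      fun m n h => (zsmul_left_strictMono hpos).injective (congrArg Subtype.val h)
  have hC : ∀ t : AddSubgroup.zmultiples |T|,
      ∫⁻ x in Ioc 0 (0 + |T|), f (t +ᵥ x) = ∫⁻ x in Ioc 0 (0 + |T|), f x := fun t =>
    setLIntegral_congr_fun_ae measurableSet_Ioc <| ae_imp_of_ae_restrict <| ae_restrict_of_ae
      (AddSubgroup.zmultiples_le.mpr (abs_mem_iff.mpr hTf) t.2)
  rw [(isAddFundamentalDomain_Ioc hpos 0 volume).lintegral_eq_tsum'' f, tsum_congr hC]
    at hfin ⊢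
  obtain h | h := eq_or_ne (∫⁻ x in Ioc 0 (0 + |T|), f x) 0
  · rw [h, tsum_zero]
  · exact absurd (ENNReal.tsum_const_eq_top_of_ne_zero h) hfin

theorem MemLp.ae_eq_zero_of_comp_sub_ae_eq_smul {E : Type*} [NormedAddCommGroup E]
    [NormedSpace ℂ E] {g : ℝ → E} {p : ℝ≥0∞} (hp0 : p ≠ 0) (hp : p ≠ ∞) (hg : MemLp g p)
    {a : ℝ} (ha : a ≠ 0) {c : ℂ} (hrel : ∀ᵐ x, g (x - a) = c • g x) : g =ᵐ[volume] 0 := by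
  rw [← eLpNorm_eq_zero_iff hg.1 hp0]
  by_contra hne
  have hshift : ‖c‖ₑ * eLpNorm g p = eLpNorm g p := by
    rw [← eLpNorm_const_smul,
      ← eLpNorm_comp_measurePreserving hg.1 (measurePreserving_sub_right volume a)]
    exact (eLpNorm_congr_ae hrel).symm
  have hc : ‖c‖ₑ = 1 := (ENNReal.mul_left_inj hne hg.2.ne).mp (by rw [one_mul, hshift])
  have hper : -a ∈ aePeriods volume (fun x => ‖g x‖ₑ ^ p.toReal) := by
    change ∀ᵐ x, _
    filter_upwards [hrel] with x hx
    rw [← sub_eq_neg_add, hx, enorm_smul, hc, one_mul]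
  apply hne
  rw [eLpNorm_eq_lintegral_rpow_enorm_toReal hp0 hp, lintegral_eq_zero_of_mem_aePeriods
    (neg_ne_zero.mpr ha) hper (lintegral_rpow_enorm_lt_top_of_eLpNorm_lt_top hp0 hp hg.2).ne]
  exact ENNReal.zero_rpow_of_pos (by have := ENNReal.toReal_pos hp0 hp; positivity)

end MeasureTheory

open ComplexConjugate

theorem Complex.conj_exp_of_re_eq_zero {z : ℂ} (hz : z.re = 0) : conj (exp z) = exp (-z) := by
  rw [← exp_conj]
  congr 1
  apply Complex.ext <;> simp [hz]

theorem relation_conj_elim_real {c₁ c₂ c₃ c₄ u v w e e' f f' : ℂ} (hu : conj u = u)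
    (hv : conj v = v) (hw : conj w = w) (he : conj e = e') (hf : conj f = f')
    (h : c₁ * u + c₂ * e * u + c₃ * v + c₄ * f * w = 0) :
    (conj c₃ * c₁ - c₃ * conj c₁) * u + conj c₃ * c₂ * e * u + -(c₃ * conj c₂) * e' * u +
      conj c₃ * c₄ * f * w + -(c₃ * conj c₄) * f' * w = 0 := by
  have hconj := congrArg conj h
  simp only [map_add, map_mul, map_zero, hu, hv, hw, he, hf] at hconj
  linear_combination conj c₃ * h - c₃ * hconj

/-- For real-valued `0 ≠ g ∈ L²(ℝ)` and `a₀ ≠ 0`: if the symmetric five-point system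
`{g, M₁g, M_{−1}g, M_bT_ag, M_{−b}T_ag}` is linearly independent, then the four-point system
`{g, M₁g, T_{a₀}g, M_bT_ag}` is linearly independent. -/
theorem hrt_restriction_principle
    (g : ℝ → ℂ) (hg : MemLp g 2 (volume : Measure ℝ)) (hg0 : ¬ g =ᵐ[volume] 0)
    (hreal : ∀ x : ℝ, (g x).im = 0)
    (a b a₀ : ℝ) (ha₀ : a₀ ≠ 0)
    (h5 : ∀ d₁ d₂ d₃ d₄ d₅ : ℂ,
      (fun x : ℝ => d₁ * g x + d₂ * Complex.exp (2 * π * Complex.I * x) * g x +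
          d₃ * Complex.exp (-(2 * π * Complex.I * x)) * g x +
          d₄ * Complex.exp (2 * π * Complex.I * b * x) * g (x - a) +
          d₅ * Complex.exp (-(2 * π * Complex.I * b * x)) * g (x - a)) =ᵐ[volume] 0 →
      d₁ = 0 ∧ d₂ = 0 ∧ d₃ = 0 ∧ d₄ = 0 ∧ d₅ = 0) :
    ∀ c₁ c₂ c₃ c₄ : ℂ,
      (fun x : ℝ => c₁ * g x + c₂ * Complex.exp (2 * π * Complex.I * x) * g x +
          c₃ * g (x - a₀) +
          c₄ * Complex.exp (2 * π * Complex.I * b * x) * g (x - a)) =ᵐ[volume] 0 →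
      c₁ = 0 ∧ c₂ = 0 ∧ c₃ = 0 ∧ c₄ = 0 := by
  intro c₁ c₂ c₃ c₄ h
  by_cases hc₃ : c₃ = 0
  · subst hc₃
    obtain ⟨h₁, h₂, -, h₄, -⟩ := h5 c₁ c₂ 0 c₄ 0 <| by
      filter_upwards [h] with x hx
      linear_combination hx
    exact ⟨h₁, h₂, rfl, h₄⟩
  · have hg_conj (x : ℝ) : conj (g x) = g x := conj_eq_iff_im.mpr (hreal x)
    obtain ⟨-, h₂, -, h₄, -⟩ := h5 (conj c₃ * c₁ - c₃ * conj c₁) (conj c₃ * c₂)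
        (-(c₃ * conj c₂)) (conj c₃ * c₄) (-(c₃ * conj c₄)) <| by
      filter_upwards [h] with x hx
      exact relation_conj_elim_real (hg_conj x) (hg_conj _) (hg_conj _)
        (conj_exp_of_re_eq_zero (by simp)) (conj_exp_of_re_eq_zero (by simp)) hx
    have hc₃' : conj c₃ ≠ 0 := (map_ne_zero _).mpr hc₃
    have hc₂ : c₂ = 0 := (mul_eq_zero.mp h₂).resolve_left hc₃'
    have hc₄ : c₄ = 0 := (mul_eq_zero.mp h₄).resolve_left hc₃'
    have htrans : ∀ᵐ x, g (x - a₀) = -(c₁ / c₃) • g x := by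
      filter_upwards [h] with x hx
      simp only [hc₂, hc₄, zero_mul, add_zero, Pi.zero_apply] at hx
      rw [smul_eq_mul]
      field_simp
      linear_combination hx
    exact absurd (hg.ae_eq_zero_of_comp_sub_ae_eq_smul two_ne_zero ofNat_ne_top ha₀ htrans) hg0
end
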